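/- arXiv:1907.00256 — 2 statements merged into one kernel-verified Lean document; each statement's English description precedes it below -/
import Mathlib

section
/- Let $\lambda>1$, $r>0$ with $1+r<|x_0|<\lambda-r$ for some $x_0\in\mathbb{R}^3$, and define $f(x)=\sum_{k\in\mathbb{Z}}\lambda^k f_0(\lambda^k x)$ where $f_0(x)=|x-x_0|^{-1}\chi_{B_r(0)}(x-x_0)$. Then $f\in M^{2,1}(\mathbb{R}^3)$, $f$ is $\lambda$-discretely self-similar, but $f\notin E^2$, i.e., $f$ is not in the closure of $C_c^\infty$ in the $L^2_{\mathrm{uloc}}$ norm. In particular, $(\lambda\text{-DSS})\cap M^{2,1}(\mathbb{R}^3)\not\subset E^2$. -/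
open MeasureTheory Set ENNReal
open scoped Pointwise

/-- The bump `f₀(x) = |x-x₀|⁻¹ χ_{B_r(0)}(x-x₀)`. -/
noncomputable def bump (x0 : EuclideanSpace ℝ (Fin 3)) (r : ℝ)
    (x : EuclideanSpace ℝ (Fin 3)) : ℝ :=
  if ‖x - x0‖ < r then ‖x - x0‖⁻¹ else 0

/-- The λ-DSS function `f(x) = ∑_{k∈ℤ} λ^k f₀(λ^k x)`. -/
noncomputable def fdss (lam : ℝ) (x0 : EuclideanSpace ℝ (Fin 3)) (r : ℝ)
    (x : EuclideanSpace ℝ (Fin 3)) : ℝ :=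
  ∑' k : ℤ, lam ^ k * bump x0 r ((lam ^ k) • x)

/-- The square of the Morrey `M^{2,1}` norm of a scalar function on `ℝ³`. -/
noncomputable def M21sq (f : EuclideanSpace ℝ (Fin 3) → ℝ) : ℝ≥0∞ :=
  ⨆ x0, ⨆ R ∈ Set.Ioi (0:ℝ),
    (ENNReal.ofReal R)⁻¹ * ∫⁻ x in Metric.ball x0 R, (‖f x‖₊ : ℝ≥0∞) ^ 2

abbrev E3 := EuclideanSpace ℝ (Fin 3)

lemma bump_nonneg (x0 : E3) (r : ℝ) (x : E3) : 0 ≤ bump x0 r x := by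
  unfold bump; split <;> positivity

lemma measurable_bump (x0 : E3) (r : ℝ) : Measurable (bump x0 r) := by
  unfold bump
  exact Measurable.ite (measurableSet_lt (by fun_prop) measurable_const) (by fun_prop) measurable_const

lemma finrank_E3 : Module.finrank ℝ E3 = 3 := by
  simp [finrank_euclideanSpace]

-- scaling lemma
lemma lint_smul (h : E3 → ℝ≥0∞) (hm : Measurable h) {c : ℝ} (hc : 0 < c) (y : E3) (R : ℝ) :
    ∫⁻ x in Metric.ball y R, h (c • x) =
      ENNReal.ofReal ((c ^ 3)⁻¹) * ∫⁻ z in Metric.ball (c • y) (c * R), h z := by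
  have hball : Metric.ball (c • y) (c * R) = c • Metric.ball y R := by
    rw [smul_ball hc.ne', Real.norm_of_nonneg hc.le]
  rw [hball]
  have hmap : Measure.map (c • ·) (volume : Measure E3) =
      ENNReal.ofReal (abs (c ^ Module.finrank ℝ E3)⁻¹) • volume :=
    Measure.map_addHaar_smul volume hc.ne'
  have hsm : Measurable fun x : E3 => c • x := measurable_const_smul c
  have hpre : (fun x : E3 => c • x) ⁻¹' (c • Metric.ball y R) = Metric.ball y R := by
    ext x
    simp [Set.mem_smul_set_iff_inv_smul_mem₀ hc.ne', inv_smul_smul₀ hc.ne']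
  have hms : MeasurableSet (c • Metric.ball y R) := by
    rw [← hball]; exact measurableSet_ball
  calc ∫⁻ x in Metric.ball y R, h (c • x) ∂volume
      = ∫⁻ x in (fun x : E3 => c • x) ⁻¹' (c • Metric.ball y R), h (c • x) ∂volume := by rw [hpre]
    _ = ∫⁻ z in c • Metric.ball y R, h z ∂(Measure.map (c • ·) volume) := by
        rw [Measure.restrict_map hsm hms, lintegral_map hm hsm]
    _ = ENNReal.ofReal ((c ^ 3)⁻¹) * ∫⁻ z in c • Metric.ball y R, h z := by
        rw [hmap, finrank_E3, Measure.restrict_smul, lintegral_smul_measure,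
          abs_of_nonneg (by positivity), smul_eq_mul]

noncomputable def v1 : ℝ≥0∞ := volume (Metric.ball (0:E3) 1)
noncomputable def hE : E3 → ℝ≥0∞ := fun z => ((‖z‖₊ : ℝ≥0∞)⁻¹) ^ 2
noncomputable def c3 : ℝ≥0∞ := ∫⁻ z in Metric.ball (0:E3) 1, hE z

lemma measurable_hE : Measurable hE := by
  unfold hE; fun_prop

lemma v1_pos : 0 < v1 := Metric.measure_ball_pos _ _ one_pos
lemma v1_lt_top : v1 < ⊤ := measure_ball_lt_top

lemma ball_vol (w : E3) {ρ : ℝ} (hρ : 0 ≤ ρ) :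
    volume (Metric.ball w ρ) = ENNReal.ofReal (ρ ^ 3) * v1 := by
  rw [Measure.addHaar_ball volume w hρ]
  simp [v1, finrank_euclideanSpace]

lemma c3_lt_top : c3 < ⊤ := by
  classical
  set S : ℕ → Set E3 := fun j =>
    Metric.ball (0:E3) ((2:ℝ)⁻¹ ^ j) \ Metric.ball (0:E3) ((2:ℝ)⁻¹ ^ (j+1)) with hS
  have hcover : Metric.ball (0:E3) 1 ⊆ {0} ∪ ⋃ j, S j := by
    intro z hz
    by_cases hz0 : z = 0
    · exact Or.inl hz0
    · right
      have ht0 : 0 < ‖z‖ := norm_pos_iff.2 hz0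
      have ht1 : ‖z‖ < 1 := by simpa using mem_ball_zero_iff.1 hz
      have hex : ∃ m : ℕ, (2:ℝ)⁻¹ ^ (m+1) ≤ ‖z‖ := by
        obtain ⟨n, hn⟩ := exists_pow_lt_of_lt_one ht0 (by norm_num : (2:ℝ)⁻¹ < 1)
        exact ⟨n, le_of_lt (lt_of_le_of_lt
          (pow_le_pow_of_le_one (by norm_num) (by norm_num) (Nat.le_succ n)) hn)⟩
      set j := Nat.find hex with hj
      have hj1 : (2:ℝ)⁻¹ ^ (j+1) ≤ ‖z‖ := Nat.find_spec hex
      have hj2 : ‖z‖ < (2:ℝ)⁻¹ ^ j := by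
        rcases Nat.eq_zero_or_pos j with h0 | hpos
        · rw [h0]; simpa using ht1
        · obtain ⟨m, hm⟩ := Nat.exists_eq_succ_of_ne_zero hpos.ne'
          have := Nat.find_min hex (m := m) (by omega)
          rw [hm]; exact lt_of_not_ge (by simpa using this)
      refine mem_iUnion.2 ⟨j, ?_⟩
      constructor
      · exact mem_ball_zero_iff.2 hj2
      · simp only [Metric.mem_ball, mem_ball_zero_iff, not_lt]
        simpa using hj1
  have hstep : ∀ j : ℕ, ∫⁻ z in S j, hE z ≤ ENNReal.ofReal (4 * (2:ℝ)⁻¹ ^ j) * v1 := by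
    intro j
    have hbd : ∀ z ∈ S j, hE z ≤ (ENNReal.ofReal ((2:ℝ)^(j+1)))^2 := by
      intro z hz
      have h1 : (2:ℝ)⁻¹ ^ (j+1) ≤ ‖z‖ := by
        have := hz.2
        simpa [Metric.mem_ball, mem_ball_zero_iff, not_lt] using this
      have h2 : ENNReal.ofReal ((2:ℝ)⁻¹ ^ (j+1)) ≤ (‖z‖₊ : ℝ≥0∞) := by
        rw [← enorm_eq_nnnorm, ← ofReal_norm_eq_enorm]
        exact ENNReal.ofReal_le_ofReal h1
      have h3 : ((‖z‖₊ : ℝ≥0∞))⁻¹ ≤ (ENNReal.ofReal ((2:ℝ)⁻¹ ^ (j+1)))⁻¹ :=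
        ENNReal.inv_le_inv.2 h2
      have h4 : (ENNReal.ofReal ((2:ℝ)⁻¹ ^ (j+1)))⁻¹ = ENNReal.ofReal ((2:ℝ)^(j+1)) := by
        rw [← ENNReal.ofReal_inv_of_pos (by positivity)]
        congr 1
        rw [← inv_pow, inv_inv]
      unfold hE
      rw [h4] at h3
      exact pow_le_pow_left' h3 2
    calc ∫⁻ z in S j, hE z
        ≤ ∫⁻ _ in S j, (ENNReal.ofReal ((2:ℝ)^(j+1)))^2 :=
          setLIntegral_mono measurable_const hbd
      _ = (ENNReal.ofReal ((2:ℝ)^(j+1)))^2 * volume (S j) := setLIntegral_const _ _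
      _ ≤ (ENNReal.ofReal ((2:ℝ)^(j+1)))^2 * volume (Metric.ball (0:E3) ((2:ℝ)⁻¹ ^ j)) :=
          mul_le_mul_right (measure_mono diff_subset) _
      _ = ENNReal.ofReal (4 * (2:ℝ)⁻¹ ^ j) * v1 := by
          rw [ball_vol _ (by positivity), ← mul_assoc]
          congr 1
          rw [← ENNReal.ofReal_pow (by positivity), ← ENNReal.ofReal_mul (by positivity)]
          congr 1
          rw [← pow_mul, ← pow_mul, inv_pow, inv_pow]
          rw [mul_inv_eq_iff_eq_mul₀ (by positivity)]
          rw [show (4:ℝ) * ((2:ℝ)^j)⁻¹ * 2^(j*3) = 4 * (2^(j*3) * ((2:ℝ)^j)⁻¹) from by ring]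
          rw [← pow_sub₀ (2:ℝ) (by norm_num) (by omega)]
          rw [show j*3 - j = j*2 from by omega]
          rw [show (j+1)*2 = j*2 + 2 from by ring, pow_add]
          ring
  have : c3 ≤ ENNReal.ofReal 4 * (1 - ENNReal.ofReal 2⁻¹)⁻¹ * v1 := by
    calc c3 ≤ ∫⁻ z in ({0} ∪ ⋃ j, S j : Set E3), hE z := lintegral_mono_set hcover
      _ ≤ (∫⁻ z in ({0} : Set E3), hE z) + ∫⁻ z in (⋃ j, S j : Set E3), hE z :=
          lintegral_union_le _ _ _
      _ ≤ 0 + ∑' j, ∫⁻ z in S j, hE z := by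
          gcongr
          · exact le_of_eq (setLIntegral_measure_zero _ _ (measure_singleton 0))
          · exact lintegral_iUnion_le _ _
      _ ≤ ∑' j : ℕ, ENNReal.ofReal (4 * (2:ℝ)⁻¹ ^ j) * v1 := by
          rw [zero_add]; exact ENNReal.tsum_le_tsum hstep
      _ = ENNReal.ofReal 4 * (1 - ENNReal.ofReal 2⁻¹)⁻¹ * v1 := by
          rw [ENNReal.tsum_mul_right]
          congr 1
          have : ∀ j : ℕ, ENNReal.ofReal (4 * (2:ℝ)⁻¹ ^ j) =
              ENNReal.ofReal 4 * (ENNReal.ofReal 2⁻¹)^j := by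
            intro j
            rw [ENNReal.ofReal_mul (by norm_num), ENNReal.ofReal_pow (by norm_num)]
          simp_rw [this]
          rw [ENNReal.tsum_mul_left, ENNReal.tsum_geometric]
  refine lt_of_le_of_lt this ?_
  refine ENNReal.mul_lt_top (ENNReal.mul_lt_top ofReal_lt_top ?_) v1_lt_top
  rw [ENNReal.inv_lt_top, tsub_pos_iff_lt]
  exact ENNReal.ofReal_lt_one.2 (by norm_num)

noncomputable def qf (x0 : E3) (r : ℝ) : E3 → ℝ≥0∞ :=
  fun z => ((‖bump x0 r z‖₊ : ℝ≥0∞)) ^ 2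

lemma measurable_qf (x0 : E3) (r : ℝ) : Measurable (qf x0 r) := by
  unfold qf; exact ((measurable_bump x0 r).nnnorm.coe_nnreal_ennreal).pow_const 2



lemma en_ne_top {a : ℝ} : ENNReal.ofReal a ≠ ⊤ := ofReal_ne_top
lemma en_ne_zero {a : ℝ} (ha : 0 < a) : ENNReal.ofReal a ≠ 0 := (ofReal_pos.2 ha).ne'

lemma en_cancel3 {a : ℝ≥0∞} (h0 : a ≠ 0) (ht : a ≠ ⊤) : a⁻¹ ^ 2 * a ^ 3 = a := by
  rw [← ENNReal.inv_pow, pow_succ a 2, ← mul_assoc,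
    ENNReal.inv_mul_cancel (pow_ne_zero 2 h0) (ENNReal.pow_ne_top ht), one_mul]

lemma en_cancel2 {a : ℝ≥0∞} (h0 : a ≠ 0) (ht : a ≠ ⊤) : a ^ 2 * (a ^ 3)⁻¹ = a⁻¹ := by
  rw [pow_succ a 2, ENNReal.mul_inv (Or.inl (pow_ne_zero 2 h0)) (Or.inl (ENNReal.pow_ne_top ht)),
    ← mul_assoc, ENNReal.mul_inv_cancel (pow_ne_zero 2 h0) (ENNReal.pow_ne_top ht), one_mul]

lemma hE_smul {c : ℝ} (hc : 0 < c) (x : E3) :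
    hE (c • x) = (ENNReal.ofReal c)⁻¹ ^ 2 * hE x := by
  unfold hE
  rw [nnnorm_smul, ENNReal.coe_mul,
    ENNReal.mul_inv (Or.inl (by simp [Real.enorm_eq_ofReal hc.le, en_ne_zero hc, hc.ne']))
      (Or.inl ENNReal.coe_ne_top), mul_pow, ← enorm_eq_nnnorm, Real.enorm_eq_ofReal hc.le]

lemma ball_hE {ρ : ℝ} (hρ : 0 < ρ) :
    ∫⁻ z in Metric.ball (0:E3) ρ, hE z = ENNReal.ofReal ρ * c3 := by
  have key := lint_smul hE measurable_hE hρ (0:E3) 1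
  rw [smul_zero, mul_one] at key
  have lhs : ∫⁻ x in Metric.ball (0:E3) 1, hE (ρ • x) = (ENNReal.ofReal ρ)⁻¹ ^ 2 * c3 := by
    simp_rw [hE_smul hρ]
    rw [lintegral_const_mul _ measurable_hE]; rfl
  rw [lhs] at key
  have h0 : ENNReal.ofReal ρ ≠ 0 := en_ne_zero hρ
  have hoR : ENNReal.ofReal (ρ^3) = (ENNReal.ofReal ρ)^3 := ENNReal.ofReal_pow hρ.le 3
  have h3 : ENNReal.ofReal ((ρ^3)⁻¹) = ((ENNReal.ofReal ρ)^3)⁻¹ := by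
    rw [ENNReal.ofReal_inv_of_pos (by positivity), hoR]
  rw [h3] at key
  have := congrArg (fun t => (ENNReal.ofReal ρ)^3 * t) key
  simp only [← mul_assoc] at this
  rw [ENNReal.mul_inv_cancel (pow_ne_zero 3 h0) (ENNReal.pow_ne_top en_ne_top), one_mul] at this
  rw [← this, mul_comm ((ENNReal.ofReal ρ)^3), en_cancel3 h0 en_ne_top]

lemma LA (x0 w : E3) {ρ : ℝ} (hρ : 0 < ρ) :
    ∫⁻ z in Metric.ball w ρ, hE (z - x0) ≤ ENNReal.ofReal ρ * (c3 + v1) := by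
  have hm : Measurable fun z : E3 => hE (z - x0) := measurable_hE.comp (by fun_prop)
  have htrans : ∫⁻ z in Metric.ball x0 ρ, hE (z - x0) =
      ∫⁻ z in Metric.ball (0:E3) ρ, hE z := by
    rw [← lintegral_indicator measurableSet_ball, ← lintegral_indicator measurableSet_ball]
    have hpt : ∀ z : E3, (Metric.ball x0 ρ).indicator (fun z => hE (z - x0)) z =
        (Metric.ball (0:E3) ρ).indicator hE (z - x0) := by
      intro z
      by_cases hz : z ∈ Metric.ball x0 ρ
      · rw [indicator_of_mem hz, indicator_of_mem (by
          simpa [mem_ball_zero_iff, ← dist_eq_norm] using hz)]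
      · rw [indicator_of_notMem hz, indicator_of_notMem (by
          simpa [mem_ball_zero_iff, ← dist_eq_norm] using hz)]
    simp_rw [hpt]
    exact lintegral_sub_right_eq_self ((Metric.ball (0:E3) ρ).indicator hE) x0
  have hpoint : ∀ z : E3, hE (z - x0) ≤
      (Metric.ball x0 ρ).indicator (fun z => hE (z - x0)) z + (ENNReal.ofReal ρ)⁻¹ ^ 2 := by
    intro z
    by_cases hz : z ∈ Metric.ball x0 ρ
    · rw [indicator_of_mem hz]; exact le_self_add
    · refine le_add_left ?_
      have h1 : ρ ≤ ‖z - x0‖ := by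
        simpa [Metric.mem_ball, dist_eq_norm, not_lt] using hz
      have h2 : ENNReal.ofReal ρ ≤ (‖z - x0‖₊ : ℝ≥0∞) := by
        rw [← enorm_eq_nnnorm, ← ofReal_norm_eq_enorm]; exact ENNReal.ofReal_le_ofReal h1
      exact pow_le_pow_left' (ENNReal.inv_le_inv.2 h2) 2
  calc ∫⁻ z in Metric.ball w ρ, hE (z - x0)
      ≤ ∫⁻ z in Metric.ball w ρ,
          ((Metric.ball x0 ρ).indicator (fun z => hE (z - x0)) z + (ENNReal.ofReal ρ)⁻¹ ^ 2) :=
        lintegral_mono fun z => hpoint z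
    _ = (∫⁻ z in Metric.ball w ρ, (Metric.ball x0 ρ).indicator (fun z => hE (z - x0)) z)
          + (ENNReal.ofReal ρ)⁻¹ ^ 2 * volume (Metric.ball w ρ) := by
        rw [lintegral_add_right _ measurable_const, setLIntegral_const]
    _ ≤ (∫⁻ z, (Metric.ball x0 ρ).indicator (fun z => hE (z - x0)) z)
          + (ENNReal.ofReal ρ)⁻¹ ^ 2 * volume (Metric.ball w ρ) := by
        gcongr; exact Measure.restrict_le_self
    _ = ENNReal.ofReal ρ * c3 + ENNReal.ofReal ρ * v1 := by
        rw [lintegral_indicator measurableSet_ball, htrans, ball_hE hρ, ball_vol w hρ.le,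
          ENNReal.ofReal_pow hρ.le, ← mul_assoc, en_cancel3 (en_ne_zero hρ) en_ne_top]
    _ = ENNReal.ofReal ρ * (c3 + v1) := (mul_add _ _ _).symm

lemma qf_le (x0 : E3) (r : ℝ) (z : E3) :
    qf x0 r z ≤ (Metric.ball x0 r).indicator (fun z => hE (z - x0)) z := by
  unfold qf bump
  by_cases hzr : ‖z - x0‖ < r
  · rw [if_pos hzr, indicator_of_mem (by simpa [Metric.mem_ball, dist_eq_norm] using hzr)]
    by_cases hz0 : z = x0
    · simp [hz0]
    · have hne : z - x0 ≠ 0 := sub_ne_zero.2 hz0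
      have : (‖‖z - x0‖⁻¹‖₊ : ℝ≥0∞) = ((‖z - x0‖₊ : ℝ≥0∞))⁻¹ := by
        rw [nnnorm_inv, nnnorm_norm, ENNReal.coe_inv (nnnorm_ne_zero_iff.2 hne)]
      rw [this]; rfl
  · rw [if_neg hzr]; simp
lemma Iq_le_rho (x0 : E3) (r : ℝ) (w : E3) {ρ : ℝ} (hρ : 0 < ρ) :
    ∫⁻ z in Metric.ball w ρ, qf x0 r z ≤ ENNReal.ofReal ρ * (c3 + v1) := by
  refine le_trans (lintegral_mono fun z => (qf_le x0 r z).trans (indicator_le_self _ _ z)) ?_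
  exact LA x0 w hρ

lemma Iq_le_r (x0 : E3) {r : ℝ} (hr : 0 < r) (w : E3) (ρ : ℝ) :
    ∫⁻ z in Metric.ball w ρ, qf x0 r z ≤ ENNReal.ofReal r * (c3 + v1) := by
  calc ∫⁻ z in Metric.ball w ρ, qf x0 r z
      ≤ ∫⁻ z, qf x0 r z := setLIntegral_le_lintegral _ _
    _ ≤ ∫⁻ z, (Metric.ball x0 r).indicator (fun z => hE (z - x0)) z := lintegral_mono (qf_le x0 r)
    _ = ∫⁻ z in Metric.ball x0 r, hE (z - x0) := lintegral_indicator measurableSet_ball _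
    _ ≤ ENNReal.ofReal r * (c3 + v1) := LA x0 x0 hr

lemma Iq_zero (x0 : E3) (r : ℝ) (w : E3) (ρ : ℝ)
    (hdisj : Metric.ball w ρ ∩ Metric.ball x0 r = ∅) :
    ∫⁻ z in Metric.ball w ρ, qf x0 r z = 0 := by
  rw [← lintegral_indicator measurableSet_ball]
  have : ∀ z, (Metric.ball w ρ).indicator (qf x0 r) z = 0 := by
    intro z
    by_cases hz : z ∈ Metric.ball w ρ
    · rw [indicator_of_mem hz]
      have hzn : z ∉ Metric.ball x0 r := fun h => by
        have : z ∈ (∅ : Set E3) := hdisj ▸ ⟨hz, h⟩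
        exact this
      have : ¬ ‖z - x0‖ < r := by simpa [Metric.mem_ball, dist_eq_norm] using hzn
      unfold qf bump
      rw [if_neg this]; simp
    · rw [indicator_of_notMem hz]
  simp_rw [this]; exact lintegral_zero

section terms
variable {lam r : ℝ} {x0 : E3}

lemma bump_mem_supp (hr : 0 < r) {z : E3} (h : bump x0 r z ≠ 0) : ‖z - x0‖ < r := by
  by_contra hc
  exact h (by unfold bump; rw [if_neg hc])

lemma term_supp (hlam : 1 < lam) (h1 : 1 + r < ‖x0‖) (h2 : ‖x0‖ < lam - r) (hr : 0 < r)
    {k : ℤ} {x : E3} (h : lam ^ k * bump x0 r ((lam ^ k) • x) ≠ 0) :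
    lam ^ (-k) < ‖x‖ ∧ ‖x‖ < lam ^ (-k + 1) := by
  have hl0 : (0:ℝ) < lam := lt_trans one_pos hlam
  have ha : (0:ℝ) < lam ^ k := zpow_pos hl0 k
  have hb : bump x0 r ((lam ^ k) • x) ≠ 0 := fun hbz => h (by rw [hbz, mul_zero])
  have hlt : ‖(lam ^ k) • x - x0‖ < r := bump_mem_supp hr hb
  have habs : |‖(lam ^ k) • x‖ - ‖x0‖| ≤ ‖(lam ^ k) • x - x0‖ := abs_norm_sub_norm_le _ _
  have hsm : ‖(lam ^ k) • x‖ = lam ^ k * ‖x‖ := by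
    rw [norm_smul, Real.norm_of_nonneg ha.le]
  have hlow : 1 < lam ^ k * ‖x‖ := by
    have := (abs_lt.1 (lt_of_le_of_lt habs hlt)).1
    rw [hsm] at this; linarith
  have hhigh : lam ^ k * ‖x‖ < lam := by
    have := (abs_lt.1 (lt_of_le_of_lt habs hlt)).2
    rw [hsm] at this; linarith
  have hxe : ‖x‖ = lam ^ (-k) * (lam ^ k * ‖x‖) := by
    rw [← mul_assoc, ← zpow_add₀ hl0.ne', neg_add_cancel, zpow_zero, one_mul]
  have hnk : (0:ℝ) < lam ^ (-k) := zpow_pos hl0 _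
  constructor
  · calc lam ^ (-k) = lam ^ (-k) * 1 := (mul_one _).symm
      _ < lam ^ (-k) * (lam ^ k * ‖x‖) := by exact mul_lt_mul_of_pos_left hlow hnk
      _ = ‖x‖ := hxe.symm
  · calc ‖x‖ = lam ^ (-k) * (lam ^ k * ‖x‖) := hxe
      _ < lam ^ (-k) * lam := mul_lt_mul_of_pos_left hhigh hnk
      _ = lam ^ (-k + 1) := by rw [zpow_add₀ hl0.ne', zpow_one]

lemma term_unique (hlam : 1 < lam) (h1 : 1 + r < ‖x0‖) (h2 : ‖x0‖ < lam - r) (hr : 0 < r)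
    {k j : ℤ} {x : E3} (hk : lam ^ k * bump x0 r ((lam ^ k) • x) ≠ 0)
    (hj : lam ^ j * bump x0 r ((lam ^ j) • x) ≠ 0) : k = j := by
  by_contra hne
  obtain ⟨hk1, hk2⟩ := term_supp hlam h1 h2 hr hk
  obtain ⟨hj1, hj2⟩ := term_supp hlam h1 h2 hr hj
  rcases lt_or_gt_of_ne hne with hlt | hlt
  · have : lam ^ (-j + 1) ≤ lam ^ (-k) := zpow_le_zpow_right₀ hlam.le (by omega)
    linarith
  · have : lam ^ (-k + 1) ≤ lam ^ (-j) := zpow_le_zpow_right₀ hlam.le (by omega)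
    linarith

lemma fdss_eq_single (hlam : 1 < lam) (h1 : 1 + r < ‖x0‖) (h2 : ‖x0‖ < lam - r) (hr : 0 < r)
    {k : ℤ} {x : E3} (h : lam ^ k * bump x0 r ((lam ^ k) • x) ≠ 0) :
    fdss lam x0 r x = lam ^ k * bump x0 r ((lam ^ k) • x) := by
  unfold fdss
  refine tsum_eq_single k fun j hj => ?_
  by_contra hne
  exact hj (term_unique hlam h1 h2 hr hne h)

lemma pointwise_sq (hlam : 1 < lam) (h1 : 1 + r < ‖x0‖) (h2 : ‖x0‖ < lam - r) (hr : 0 < r)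
    (x : E3) :
    (‖fdss lam x0 r x‖₊ : ℝ≥0∞) ^ 2 ≤
      ∑' k : ℤ, (‖lam ^ k * bump x0 r ((lam ^ k) • x)‖₊ : ℝ≥0∞) ^ 2 := by
  by_cases hz : ∃ k : ℤ, lam ^ k * bump x0 r ((lam ^ k) • x) ≠ 0
  · obtain ⟨k, hk⟩ := hz
    rw [fdss_eq_single hlam h1 h2 hr hk]
    exact ENNReal.le_tsum k
  · push_neg at hz
    have : fdss lam x0 r x = 0 := by
      unfold fdss; rw [tsum_congr hz]; exact tsum_zero
    simp [this]

end terms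

section U
variable {lam r : ℝ} {x0 : E3}

lemma u_eq (hlam : 1 < lam) (x0 : E3) (r : ℝ) (k : ℤ) (y : E3) (R : ℝ) :
    ∫⁻ x in Metric.ball y R, (‖lam ^ k * bump x0 r ((lam ^ k) • x)‖₊ : ℝ≥0∞) ^ 2 =
      (ENNReal.ofReal (lam ^ k))⁻¹ *
        ∫⁻ z in Metric.ball ((lam ^ k) • y) (lam ^ k * R), qf x0 r z := by
  have hl0 : (0:ℝ) < lam := lt_trans one_pos hlam
  have ha : (0:ℝ) < lam ^ k := zpow_pos hl0 k
  have hone : ∀ x : E3, (‖lam ^ k * bump x0 r ((lam ^ k) • x)‖₊ : ℝ≥0∞) ^ 2 =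
      (ENNReal.ofReal (lam ^ k)) ^ 2 * qf x0 r ((lam ^ k) • x) := by
    intro x
    rw [nnnorm_mul, ENNReal.coe_mul, mul_pow, ← enorm_eq_nnnorm, Real.enorm_eq_ofReal ha.le]
    rfl
  simp_rw [hone]
  rw [lintegral_const_mul (ENNReal.ofReal (lam ^ k) ^ 2)
      (μ := volume.restrict (Metric.ball y R))
      (f := fun x => qf x0 r ((lam ^ k) • x))
      ((measurable_qf x0 r).comp (measurable_const_smul _)),
    lint_smul (qf x0 r) (measurable_qf x0 r) ha y R]
  rw [ENNReal.ofReal_inv_of_pos (by positivity), ENNReal.ofReal_pow ha.le, ← mul_assoc,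
    en_cancel2 (ofReal_pos.2 ha).ne' ofReal_ne_top]

lemma u_le_R (hlam : 1 < lam) (hr : 0 < r) (x0 : E3) (k : ℤ) (y : E3) {R : ℝ} (hR : 0 < R) :
    ∫⁻ x in Metric.ball y R, (‖lam ^ k * bump x0 r ((lam ^ k) • x)‖₊ : ℝ≥0∞) ^ 2 ≤
      ENNReal.ofReal R * (c3 + v1) := by
  have hl0 : (0:ℝ) < lam := lt_trans one_pos hlam
  have ha : (0:ℝ) < lam ^ k := zpow_pos hl0 k
  rw [u_eq hlam x0 r k y R]
  calc (ENNReal.ofReal (lam ^ k))⁻¹ *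
        ∫⁻ z in Metric.ball ((lam ^ k) • y) (lam ^ k * R), qf x0 r z
      ≤ (ENNReal.ofReal (lam ^ k))⁻¹ * (ENNReal.ofReal (lam ^ k * R) * (c3 + v1)) := by
        gcongr
        exact Iq_le_rho x0 r _ (by positivity)
    _ = ENNReal.ofReal R * (c3 + v1) := by
        rw [ENNReal.ofReal_mul ha.le, mul_assoc, ← mul_assoc,
          ENNReal.inv_mul_cancel (ofReal_pos.2 ha).ne' ofReal_ne_top, one_mul]

lemma u_le_r (hlam : 1 < lam) (hr : 0 < r) (x0 : E3) (k : ℤ) (y : E3) (R : ℝ) :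
    ∫⁻ x in Metric.ball y R, (‖lam ^ k * bump x0 r ((lam ^ k) • x)‖₊ : ℝ≥0∞) ^ 2 ≤
      ENNReal.ofReal (lam ^ (-k) * r) * (c3 + v1) := by
  have hl0 : (0:ℝ) < lam := lt_trans one_pos hlam
  have ha : (0:ℝ) < lam ^ k := zpow_pos hl0 k
  rw [u_eq hlam x0 r k y R]
  calc (ENNReal.ofReal (lam ^ k))⁻¹ *
        ∫⁻ z in Metric.ball ((lam ^ k) • y) (lam ^ k * R), qf x0 r z
      ≤ (ENNReal.ofReal (lam ^ k))⁻¹ * (ENNReal.ofReal r * (c3 + v1)) := by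
        gcongr
        exact Iq_le_r x0 hr _ _
    _ = ENNReal.ofReal (lam ^ (-k) * r) * (c3 + v1) := by
        rw [← ENNReal.ofReal_inv_of_pos ha, ← mul_assoc, ← ENNReal.ofReal_mul (by positivity),
          ← zpow_neg]

lemma u_zero (hlam : 1 < lam) (x0 : E3) (r : ℝ) (k : ℤ) (y : E3) (R : ℝ)
    (h : Metric.ball ((lam ^ k) • y) (lam ^ k * R) ∩ Metric.ball x0 r = ∅) :
    ∫⁻ x in Metric.ball y R, (‖lam ^ k * bump x0 r ((lam ^ k) • x)‖₊ : ℝ≥0∞) ^ 2 = 0 := by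
  rw [u_eq hlam x0 r k y R, Iq_zero x0 r _ _ h, mul_zero]

end U

section sumbound
variable {lam r : ℝ} {x0 : E3}

lemma P_low (hlam : 1 < lam) {k : ℤ} {y : E3} {R : ℝ}
    (h : (Metric.ball ((lam ^ k) • y) (lam ^ k * R) ∩ Metric.ball x0 r).Nonempty) :
    ‖x0‖ - r < lam ^ k * (‖y‖ + R) := by
  have hl0 : (0:ℝ) < lam := lt_trans one_pos hlam
  have ha : (0:ℝ) < lam ^ k := zpow_pos hl0 k
  obtain ⟨z, hz1, hz2⟩ := h
  rw [Metric.mem_ball] at hz1 hz2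
  have h4 : dist x0 (0:E3) ≤ dist x0 z + dist z ((lam ^ k) • y) + dist ((lam ^ k) • y) 0 :=
    dist_triangle4 _ _ _ _
  rw [dist_zero_right, dist_zero_right, dist_comm x0 z] at h4
  have hsm : ‖(lam ^ k) • y‖ = lam ^ k * ‖y‖ := by
    rw [norm_smul, Real.norm_of_nonneg ha.le]
  rw [hsm] at h4
  nlinarith

lemma P_high (hlam : 1 < lam) {k : ℤ} {y : E3} {R : ℝ}
    (h : (Metric.ball ((lam ^ k) • y) (lam ^ k * R) ∩ Metric.ball x0 r).Nonempty) :
    lam ^ k * ‖y‖ < ‖x0‖ + r + lam ^ k * R := by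
  have hl0 : (0:ℝ) < lam := lt_trans one_pos hlam
  have ha : (0:ℝ) < lam ^ k := zpow_pos hl0 k
  obtain ⟨z, hz1, hz2⟩ := h
  rw [Metric.mem_ball] at hz1 hz2
  have h4 : dist ((lam ^ k) • y) (0:E3) ≤ dist ((lam ^ k) • y) z + dist z x0 + dist x0 0 :=
    dist_triangle4 _ _ _ _
  rw [dist_zero_right, dist_zero_right, dist_comm ((lam ^ k) • y) z] at h4
  have hsm : ‖(lam ^ k) • y‖ = lam ^ k * ‖y‖ := by
    rw [norm_smul, Real.norm_of_nonneg ha.le]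
  rw [hsm] at h4
  nlinarith

lemma zpow_cancel (hl0 : (0:ℝ) < lam) (k : ℤ) (t : ℝ) :
    lam ^ (-k) * (lam ^ k * t) = t := by
  rw [← mul_assoc, ← zpow_add₀ hl0.ne', neg_add_cancel, zpow_zero, one_mul]

lemma sum_bound (hlam : 1 < lam) (hr : 0 < r) (h1 : 1 + r < ‖x0‖) (h2 : ‖x0‖ < lam - r)
    (y : E3) {R : ℝ} (hR : 0 < R) :
    ∑' k : ℤ, ∫⁻ x in Metric.ball y R, (‖lam ^ k * bump x0 r ((lam ^ k) • x)‖₊ : ℝ≥0∞) ^ 2 ≤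
      ENNReal.ofReal R * ((c3 + v1) *
        max 1 (ENNReal.ofReal (2 * r / ((‖x0‖ - r) - (‖x0‖ + r) / lam)) *
          (1 - ENNReal.ofReal lam⁻¹)⁻¹)) := by
  classical
  have hl0 : (0:ℝ) < lam := lt_trans one_pos hlam
  set δ := (‖x0‖ - r) - (‖x0‖ + r) / lam with hδdef
  have hδ : 0 < δ := by
    have hB : (‖x0‖ + r) / lam < 1 := (div_lt_one hl0).2 (by linarith)
    have hA : 1 < ‖x0‖ - r := by linarith
    simp only [hδdef]; linarith
  set K := c3 + v1 with hK
  set Dmax := max 1 (ENNReal.ofReal (2 * r / δ) * (1 - ENNReal.ofReal lam⁻¹)⁻¹) with hD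
  set P : ℤ → Prop :=
    fun k => (Metric.ball ((lam ^ k) • y) (lam ^ k * R) ∩ Metric.ball x0 r).Nonempty with hP
  set u : ℤ → ℝ≥0∞ :=
    fun k => ∫⁻ x in Metric.ball y R, (‖lam ^ k * bump x0 r ((lam ^ k) • x)‖₊ : ℝ≥0∞) ^ 2
    with hu
  show ∑' k, u k ≤ ENNReal.ofReal R * (K * Dmax)
  by_cases hex : ∃ k, P k
  · -- bounded below
    have hyR : 0 < ‖y‖ + R := by positivity
    have hc0 : 0 < (‖x0‖ - r) / (‖y‖ + R) := by
      apply div_pos (by linarith) hyR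
    have hbdd : ∃ b : ℤ, ∀ k, P k → b ≤ k := by
      obtain ⟨n, hn⟩ := exists_pow_lt_of_lt_one hc0 (inv_lt_one_of_one_lt₀ hlam)
      refine ⟨-(n:ℤ), fun k hk => ?_⟩
      by_contra hcon
      push_neg at hcon
      have hlow := P_low hlam hk
      have hlt : lam ^ k < lam ^ (-(n:ℤ)) := zpow_lt_zpow_right₀ hlam hcon
      have heq : lam ^ (-(n:ℤ)) = (lam⁻¹) ^ n := by
        rw [zpow_neg, zpow_natCast, inv_pow]
      have : lam ^ k * (‖y‖ + R) < ((‖x0‖ - r) / (‖y‖ + R)) * (‖y‖ + R) := by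
        apply mul_lt_mul_of_pos_right _ hyR
        calc lam ^ k < lam ^ (-(n:ℤ)) := hlt
          _ = (lam⁻¹) ^ n := heq
          _ < (‖x0‖ - r) / (‖y‖ + R) := hn
      rw [div_mul_cancel₀ _ hyR.ne'] at this
      linarith
    obtain ⟨kmin, hPk, hleast⟩ := Int.exists_least_of_bdd hbdd hex
    by_cases huniq : ∀ k, P k → k = kmin
    · have hz : ∀ j, j ≠ kmin → u j = 0 := by
        intro j hj
        apply u_zero hlam x0 r j y R
        rw [← Set.not_nonempty_iff_eq_empty]
        exact fun hne => hj (huniq j hne)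
      rw [tsum_eq_single kmin hz]
      calc u kmin ≤ ENNReal.ofReal R * K := u_le_R hlam hr x0 kmin y hR
        _ ≤ ENNReal.ofReal R * (K * Dmax) := by
            rw [← mul_one K, mul_assoc, one_mul]
            gcongr
            exact le_max_left _ _
    · push_neg at huniq
      obtain ⟨k', hPk', hk'ne⟩ := huniq
      have hk'gt : kmin < k' := lt_of_le_of_ne (hleast k' hPk') (Ne.symm hk'ne)
      have hnkmin : (0:ℝ) < lam ^ (-kmin) := zpow_pos hl0 _
      -- separation
      have hsep : lam ^ (-kmin) * δ < 2 * R := by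
        have hlow := P_low hlam hPk
        have hhigh := P_high hlam hPk'
        -- from hlow : λ^{-kmin}(‖x0‖-r) < ‖y‖+R
        have e1 : lam ^ (-kmin) * (‖x0‖ - r) < ‖y‖ + R := by
          have := mul_lt_mul_of_pos_left hlow hnkmin
          rwa [zpow_cancel hl0 kmin] at this
        -- from hhigh: ‖y‖ < λ^{-k'}(‖x0‖+r) + R
        have hnk' : (0:ℝ) < lam ^ (-k') := zpow_pos hl0 _
        have e2 : ‖y‖ < lam ^ (-k') * (‖x0‖ + r) + R := by
          have := mul_lt_mul_of_pos_left hhigh hnk'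
          rw [zpow_cancel hl0 k', mul_add, zpow_cancel hl0 k'] at this
          linarith
        have e3 : lam ^ (-k') ≤ lam ^ (-kmin) / lam := by
          have : lam ^ (-k') ≤ lam ^ (-kmin - 1) := zpow_le_zpow_right₀ hlam.le (by omega)
          rwa [zpow_sub₀ hl0.ne', zpow_one] at this
        have hx0r : (0:ℝ) < ‖x0‖ + r := by linarith
        have e4 : lam ^ (-k') * (‖x0‖ + r) ≤ (lam ^ (-kmin) / lam) * (‖x0‖ + r) :=
          mul_le_mul_of_nonneg_right e3 hx0r.le
        have expand : lam ^ (-kmin) * δ =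
            lam ^ (-kmin) * (‖x0‖ - r) - (lam ^ (-kmin) / lam) * (‖x0‖ + r) := by
          simp only [hδdef]; ring
        rw [expand]
        linarith
      have hkd : lam ^ (-kmin) < 2 * R / δ := (lt_div_iff₀ hδ).2 hsep
      -- sum over k ≥ kmin of geometric bound
      set w : ℤ → ℝ≥0∞ :=
        fun k => if kmin ≤ k then ENNReal.ofReal (lam ^ (-k) * r) * K else 0 with hw
      have hle : ∀ k, u k ≤ w k := by
        intro k
        by_cases hk : kmin ≤ k
        · rw [hw]; simp only [if_pos hk]
          exact u_le_r hlam hr x0 k y R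
        · rw [hw]; simp only [if_neg hk]
          push_neg at hk
          have : ¬ P k := fun hPkk => absurd (hleast k hPkk) (by omega)
          rw [hu]
          simp only []
          rw [u_zero hlam x0 r k y R (Set.not_nonempty_iff_eq_empty.1 this)]
      have step1 : ∑' k, u k ≤ ∑' k, w k := ENNReal.tsum_le_tsum hle
      have hinj : Function.Injective (fun n : ℕ => kmin + (n:ℤ)) := by
        intro a b hab
        simpa using hab
      have hsupp : Function.support w ⊆ Set.range (fun n : ℕ => kmin + (n:ℤ)) := by
        intro k hk
        have hge : kmin ≤ k := by
          by_contra hcon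
          apply hk
          rw [hw]; simp only [if_neg hcon]
        refine ⟨(k - kmin).toNat, ?_⟩
        simp only []
        rw [Int.toNat_of_nonneg (by omega : (0:ℤ) ≤ k - kmin)]
        omega
      have step2 : ∑' k, w k = ∑' n : ℕ, w (kmin + n) := (hinj.tsum_eq hsupp).symm
      have hwn : ∀ n : ℕ, w (kmin + n) =
          (ENNReal.ofReal (lam ^ (-kmin) * r) * K) * (ENNReal.ofReal lam⁻¹) ^ n := by
        intro n
        rw [hw]
        simp only [if_pos (by omega : kmin ≤ kmin + (n:ℤ))]
        have hzz : lam ^ (-(kmin + (n:ℤ))) = lam ^ (-kmin) * (lam⁻¹) ^ n := by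
          rw [neg_add, zpow_add₀ hl0.ne']
          congr 1
          rw [zpow_neg, zpow_natCast, inv_pow]
        rw [hzz]
        rw [show lam ^ (-kmin) * lam⁻¹ ^ n * r = (lam ^ (-kmin) * r) * lam⁻¹ ^ n from by ring]
        rw [ENNReal.ofReal_mul (by positivity), ENNReal.ofReal_pow (by positivity)]
        ring
      have step3 : ∑' n : ℕ, w (kmin + n) =
          (ENNReal.ofReal (lam ^ (-kmin) * r) * K) * (1 - ENNReal.ofReal lam⁻¹)⁻¹ := by
        simp_rw [hwn]
        rw [ENNReal.tsum_mul_left, ENNReal.tsum_geometric]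
      have hA : ENNReal.ofReal (lam ^ (-kmin) * r) ≤
          ENNReal.ofReal R * ENNReal.ofReal (2 * r / δ) := by
        rw [← ENNReal.ofReal_mul hR.le]
        apply ENNReal.ofReal_le_ofReal
        calc lam ^ (-kmin) * r ≤ (2 * R / δ) * r :=
              mul_le_mul_of_nonneg_right hkd.le hr.le
          _ = R * (2 * r / δ) := by ring
      calc ∑' k, u k ≤ ∑' k, w k := step1
        _ = (ENNReal.ofReal (lam ^ (-kmin) * r) * K) * (1 - ENNReal.ofReal lam⁻¹)⁻¹ := by
            rw [step2, step3]
        _ ≤ (ENNReal.ofReal R * ENNReal.ofReal (2 * r / δ) * K) *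
              (1 - ENNReal.ofReal lam⁻¹)⁻¹ := by gcongr
        _ = ENNReal.ofReal R * (K * (ENNReal.ofReal (2 * r / δ) *
              (1 - ENNReal.ofReal lam⁻¹)⁻¹)) := by ring
        _ ≤ ENNReal.ofReal R * (K * Dmax) := by
            gcongr
            exact le_max_right _ _
  · push_neg at hex
    have : ∀ k, u k = 0 := by
      intro k
      exact u_zero hlam x0 r k y R (Set.not_nonempty_iff_eq_empty.1 (hex k))
    rw [tsum_congr this, tsum_zero]
    exact zero_le
end sumbound

section parts
variable {lam r : ℝ} {x0 : E3}

lemma fdss_dss (hlam : 1 < lam) (x0 : E3) (r : ℝ) (x : E3) :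
    fdss lam x0 r x = lam * fdss lam x0 r (lam • x) := by
  have hl0 : lam ≠ 0 := (lt_trans one_pos hlam).ne'
  unfold fdss
  rw [← tsum_mul_left]
  have hterm : ∀ k : ℤ, lam * (lam ^ k * bump x0 r ((lam ^ k) • lam • x)) =
      lam ^ (k + 1) * bump x0 r ((lam ^ (k + 1)) • x) := by
    intro k
    rw [smul_smul, ← zpow_add_one₀ hl0, ← mul_assoc, mul_comm lam (lam ^ k), zpow_add_one₀ hl0]
  rw [tsum_congr hterm]
  exact ((Equiv.addRight (1:ℤ)).tsum_eq fun k => lam ^ k * bump x0 r ((lam ^ k) • x)).symm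

lemma part3 (hlam : 1 < lam) (hr : 0 < r) (h1 : 1 + r < ‖x0‖) (h2 : ‖x0‖ < lam - r) :
    ¬ (∀ ε : ℝ, 0 < ε → ∃ φ : E3 → ℝ,
        ContDiff ℝ (⊤ : ℕ∞) φ ∧ HasCompactSupport φ ∧
        ∀ y : E3,
          ∫⁻ x in Metric.ball y 1, (‖fdss lam x0 r x - φ x‖₊ : ℝ≥0∞) ^ 2 <
            ENNReal.ofReal ε) := by
  intro H
  have hl0 : (0:ℝ) < lam := lt_trans one_pos hlam
  have hx0 : (0:ℝ) < ‖x0‖ := by linarith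
  have hv1top : volume (Metric.ball (0:E3) 1) ≠ ⊤ := measure_ball_lt_top.ne
  have hv1pos : 0 < volume (Metric.ball (0:E3) 1) := Metric.measure_ball_pos volume 0 one_pos
  set ε := (volume (Metric.ball (0:E3) 1)).toReal with hεdef
  have hε : 0 < ε := ENNReal.toReal_pos hv1pos.ne' hv1top
  obtain ⟨φ, hφ1, hφ2, hφ3⟩ := H ε hε
  obtain ⟨M, hM⟩ := hφ2.isBounded.subset_closedBall (0:E3)
  obtain ⟨n1, hn1⟩ := exists_pow_lt_of_lt_one hr (inv_lt_one_of_one_lt₀ hlam)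
  obtain ⟨n2, hn2⟩ := pow_unbounded_of_one_lt ((M + 1) / ‖x0‖) hlam
  set n := max n1 n2 with hn
  have ha : lam⁻¹ ^ n < r :=
    lt_of_le_of_lt (pow_le_pow_of_le_one (by positivity)
      (inv_le_one_of_one_le₀ hlam.le) (le_max_left _ _)) hn1
  have hb : (M + 1) / ‖x0‖ < lam ^ n :=
    lt_of_lt_of_le hn2 (pow_le_pow_right₀ hlam.le (le_max_right _ _))
  have hb' : M + 1 < lam ^ n * ‖x0‖ := by
    rw [div_lt_iff₀ hx0] at hb; linarith
  set k : ℤ := -(n:ℤ) with hk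
  have hak : lam ^ k = lam⁻¹ ^ n := by
    rw [hk, zpow_neg, zpow_natCast, inv_pow]
  have hakpos : (0:ℝ) < lam ^ k := zpow_pos hl0 _
  set y : E3 := (lam ^ ((n:ℕ):ℤ)) • x0 with hy
  have hky : (lam ^ k) • y = x0 := by
    rw [hy, smul_smul, ← zpow_add₀ hl0.ne', hk, neg_add_cancel, zpow_zero, one_smul]
  have hynorm : ‖y‖ = lam ^ n * ‖x0‖ := by
    rw [hy, norm_smul, Real.norm_of_nonneg (zpow_pos hl0 _).le, zpow_natCast]
  -- the key pointwise estimate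
  have hpt : ∀ x ∈ Metric.ball y 1 \ {y},
      (1:ℝ≥0∞) ≤ (‖fdss lam x0 r x - φ x‖₊ : ℝ≥0∞) ^ 2 := by
    intro x hx
    obtain ⟨hx1, hx2⟩ := hx
    have hxy : ‖x - y‖ < 1 := by
      rw [Metric.mem_ball, dist_eq_norm] at hx1; exact hx1
    have hxne : x ≠ y := hx2
    have h0xy : 0 < ‖x - y‖ := norm_pos_iff.2 (sub_ne_zero.2 hxne)
    -- φ x = 0
    have hφx : φ x = 0 := by
      apply image_eq_zero_of_notMem_tsupport
      intro hmem
      have := hM hmem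
      rw [Metric.mem_closedBall, dist_zero_right] at this
      have hnx : M + 1 - 1 < ‖x‖ := by
        have htri : ‖y‖ - ‖x‖ ≤ ‖y - x‖ := by
          have := norm_sub_norm_le y x; linarith
        rw [norm_sub_rev, hynorm] at htri
        linarith
      linarith
    -- the k-th term
    have hsub : (lam ^ k) • x - x0 = (lam ^ k) • (x - y) := by
      rw [smul_sub, hky]
    have hnsub : ‖(lam ^ k) • x - x0‖ = lam ^ k * ‖x - y‖ := by
      rw [hsub, norm_smul, Real.norm_of_nonneg hakpos.le]
    have hlt : ‖(lam ^ k) • x - x0‖ < r := by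
      rw [hnsub]
      calc lam ^ k * ‖x - y‖ < lam ^ k * 1 := by
            exact mul_lt_mul_of_pos_left hxy hakpos
        _ = lam ^ k := mul_one _
        _ = lam⁻¹ ^ n := hak
        _ < r := ha
    have hbmp : bump x0 r ((lam ^ k) • x) = (lam ^ k * ‖x - y‖)⁻¹ := by
      unfold bump; rw [if_pos hlt, hnsub]
    have hterm : lam ^ k * bump x0 r ((lam ^ k) • x) = ‖x - y‖⁻¹ := by
      rw [hbmp, mul_inv, ← mul_assoc, mul_inv_cancel₀ hakpos.ne', one_mul]
    have hge1 : (1:ℝ) ≤ ‖x - y‖⁻¹ := (one_le_inv₀ h0xy).2 hxy.le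
    have hfd : fdss lam x0 r x = ‖x - y‖⁻¹ := by
      rw [← hterm]
      exact fdss_eq_single hlam h1 h2 hr (by rw [hterm]; positivity)
    have hnorm1 : (1:ℝ) ≤ ‖fdss lam x0 r x - φ x‖ := by
      rw [hfd, hφx, sub_zero, Real.norm_of_nonneg (by positivity)]
      exact hge1
    have : (1:ℝ≥0∞) ≤ (‖fdss lam x0 r x - φ x‖₊ : ℝ≥0∞) := by
      calc (1:ℝ≥0∞) = ENNReal.ofReal 1 := by simp
        _ ≤ ENNReal.ofReal ‖fdss lam x0 r x - φ x‖ := ENNReal.ofReal_le_ofReal hnorm1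
        _ = (‖fdss lam x0 r x - φ x‖₊ : ℝ≥0∞) := ofReal_norm_eq_enorm _
    calc (1:ℝ≥0∞) = 1 ^ 2 := (one_pow 2).symm
      _ ≤ (‖fdss lam x0 r x - φ x‖₊ : ℝ≥0∞) ^ 2 := pow_le_pow_left' this 2
  -- contradiction
  have hlow : ENNReal.ofReal ε ≤
      ∫⁻ x in Metric.ball y 1, (‖fdss lam x0 r x - φ x‖₊ : ℝ≥0∞) ^ 2 := by
    have e0 : ENNReal.ofReal ε = volume (Metric.ball (0:E3) 1) := ENNReal.ofReal_toReal hv1top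
    have e1 : volume (Metric.ball (0:E3) 1) = volume (Metric.ball y 1) :=
      (Measure.addHaar_ball_center volume y 1).symm
    have e2 : volume (Metric.ball y 1) = volume (Metric.ball y 1 \ {y}) :=
      (measure_diff_null (measure_singleton y)).symm
    rw [e0, e1, e2]
    calc volume (Metric.ball y 1 \ {y})
        = ∫⁻ _ in Metric.ball y 1 \ {y}, (1:ℝ≥0∞) := (setLIntegral_one _).symm
      _ ≤ ∫⁻ x in Metric.ball y 1 \ {y}, (‖fdss lam x0 r x - φ x‖₊ : ℝ≥0∞) ^ 2 :=
          setLIntegral_mono' (measurableSet_ball.diff (measurableSet_singleton y)) hpt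
      _ ≤ ∫⁻ x in Metric.ball y 1, (‖fdss lam x0 r x - φ x‖₊ : ℝ≥0∞) ^ 2 :=
          lintegral_mono_set diff_subset
  exact absurd (lt_of_le_of_lt hlow (hφ3 y)) (lt_irrefl _)

end parts


section main
variable {lam r : ℝ} {x0 : E3}

lemma part1 (hlam : 1 < lam) (hr : 0 < r) (h1 : 1 + r < ‖x0‖) (h2 : ‖x0‖ < lam - r) :
    M21sq (fdss lam x0 r) < ⊤ := by
  set CC : ℝ≥0∞ := (c3 + v1) *
    max 1 (ENNReal.ofReal (2 * r / ((‖x0‖ - r) - (‖x0‖ + r) / lam)) *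
      (1 - ENNReal.ofReal lam⁻¹)⁻¹) with hCCdef
  have hmeas : ∀ k : ℤ,
      Measurable fun x : E3 => (‖lam ^ k * bump x0 r ((lam ^ k) • x)‖₊ : ℝ≥0∞) ^ 2 := by
    intro k
    exact ((((measurable_bump x0 r).comp (measurable_const_smul _)).const_mul
      (lam ^ k)).nnnorm.coe_nnreal_ennreal).pow_const 2
  have hCC : CC < ⊤ := by
    rw [hCCdef]
    apply ENNReal.mul_lt_top
    · exact ENNReal.add_lt_top.2 ⟨c3_lt_top, v1_lt_top⟩
    · apply max_lt one_lt_top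
      apply ENNReal.mul_lt_top ofReal_lt_top
      rw [ENNReal.inv_lt_top, tsub_pos_iff_lt]
      exact ENNReal.ofReal_lt_one.2 (inv_lt_one_of_one_lt₀ hlam)
  refine lt_of_le_of_lt ?_ hCC
  unfold M21sq
  refine iSup_le fun y => iSup_le fun R => iSup_le fun hR => ?_
  have hRpos : 0 < R := mem_Ioi.1 hR
  have hint : ∫⁻ x in Metric.ball y R, (‖fdss lam x0 r x‖₊ : ℝ≥0∞) ^ 2 ≤
      ENNReal.ofReal R * CC := by
    calc ∫⁻ x in Metric.ball y R, (‖fdss lam x0 r x‖₊ : ℝ≥0∞) ^ 2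
        ≤ ∫⁻ x in Metric.ball y R,
            ∑' k : ℤ, (‖lam ^ k * bump x0 r ((lam ^ k) • x)‖₊ : ℝ≥0∞) ^ 2 :=
          lintegral_mono (pointwise_sq hlam h1 h2 hr)
      _ = ∑' k : ℤ, ∫⁻ x in Metric.ball y R,
            (‖lam ^ k * bump x0 r ((lam ^ k) • x)‖₊ : ℝ≥0∞) ^ 2 :=
          lintegral_tsum fun k => (hmeas k).aemeasurable
      _ ≤ ENNReal.ofReal R * CC := sum_bound hlam hr h1 h2 y hRpos
  calc (ENNReal.ofReal R)⁻¹ * ∫⁻ x in Metric.ball y R, (‖fdss lam x0 r x‖₊ : ℝ≥0∞) ^ 2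
      ≤ (ENNReal.ofReal R)⁻¹ * (ENNReal.ofReal R * CC) := by gcongr
    _ = CC := by
        rw [← mul_assoc, ENNReal.inv_mul_cancel (en_ne_zero hRpos) ofReal_ne_top, one_mul]

end main

/-- The DSS example `f(x) = ∑_k λ^k f₀(λ^k x)` belongs to `M^{2,1}(ℝ³)`, is
`λ`-discretely self-similar, but is not in `E²` (the closure of `C_c^∞` in `L²_uloc`). -/
theorem dss_M21_not_E2 (lam r : ℝ) (x0 : EuclideanSpace ℝ (Fin 3))
    (hlam : 1 < lam) (hr : 0 < r) (h1 : 1 + r < ‖x0‖) (h2 : ‖x0‖ < lam - r) :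
    M21sq (fdss lam x0 r) < ⊤ ∧
    (∀ x, fdss lam x0 r x = lam * fdss lam x0 r (lam • x)) ∧
    ¬ (∀ ε : ℝ, 0 < ε → ∃ φ : EuclideanSpace ℝ (Fin 3) → ℝ,
        ContDiff ℝ (⊤ : ℕ∞) φ ∧ HasCompactSupport φ ∧
        ∀ y : EuclideanSpace ℝ (Fin 3),
          ∫⁻ x in Metric.ball y 1, (‖fdss lam x0 r x - φ x‖₊ : ℝ≥0∞) ^ 2 <
            ENNReal.ofReal ε) := by
  exact ⟨part1 hlam hr h1 h2, fun x => fdss_dss hlam x0 r x, part3 hlam hr h1 h2⟩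
end

section
/- The function $f:\mathbb{R}^3\to\mathbb{R}$ given by $f(x)=\sum_{k\in\mathbb{Z}}|x-k e_1|^{-1}\chi_{B_{1/8}(0)}(x-k e_1)$ belongs to the Morrey space $M^{2,1}(\mathbb{R}^3)$ but does not belong to $E^2$ (the closure of $C_c^\infty$ in $L^2_{\mathrm{uloc}}$). -/
open MeasureTheory Set ENNReal

/-- First standard basis vector of `ℝ³`. -/
noncomputable def e1 : EuclideanSpace ℝ (Fin 3) := EuclideanSpace.single 0 1

/-- The periodic function `f(x) = ∑_{k∈ℤ} |x - k e₁|⁻¹ χ_{B_{1/8}(0)}(x - k e₁)`. -/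
noncomputable def fper (x : EuclideanSpace ℝ (Fin 3)) : ℝ :=
  ∑' k : ℤ, (if ‖x - (k : ℝ) • e1‖ < 1/8 then ‖x - (k : ℝ) • e1‖⁻¹ else 0)

lemma e1_norm : ‖e1‖ = 1 := by
  simp [e1, EuclideanSpace.norm_single]

lemma coord_le_norm (x : EuclideanSpace ℝ (Fin 3)) : |x 0| ≤ ‖x‖ := by
  rw [EuclideanSpace.norm_eq, ← Real.sqrt_sq_eq_abs]
  apply Real.sqrt_le_sqrt
  have := Finset.single_le_sum (f := fun i => ‖x i‖ ^ 2) (fun i _ => sq_nonneg _)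
    (Finset.mem_univ 0)
  simpa [Real.norm_eq_abs, sq_abs] using this

lemma coord_sub_smul (x : EuclideanSpace ℝ (Fin 3)) (k : ℤ) :
    (x - (k : ℝ) • e1) 0 = x 0 - k := by
  simp [e1, EuclideanSpace.single_apply]

lemma dist_int_smul {j k : ℤ} (h : j ≠ k) : (1:ℝ) ≤ ‖(j:ℝ) • e1 - (k:ℝ) • e1‖ := by
  rw [← sub_smul, norm_smul, e1_norm, mul_one]
  rw [show ((j:ℝ) - k) = ((j - k : ℤ) : ℝ) by push_cast; ring]
  rw [Real.norm_eq_abs, ← Int.cast_abs]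
  exact_mod_cast Int.one_le_abs (sub_ne_zero.2 h)

lemma fper_eq (x : EuclideanSpace ℝ (Fin 3)) (k : ℤ) (hk : ‖x - (k:ℝ) • e1‖ < 1/8) :
    fper x = ‖x - (k:ℝ) • e1‖⁻¹ := by
  unfold fper
  rw [tsum_eq_single k, if_pos hk]
  intro j hj
  rw [if_neg]
  intro hjx
  have h1 := dist_int_smul hj
  have h2 : ‖(j:ℝ) • e1 - (k:ℝ) • e1‖ ≤ ‖(j:ℝ) • e1 - x‖ + ‖x - (k:ℝ) • e1‖ :=
    norm_sub_le_norm_sub_add_norm_sub _ _ _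
  have h3 : ‖(j:ℝ) • e1 - x‖ = ‖x - (j:ℝ) • e1‖ := norm_sub_rev _ _
  linarith

lemma fper_eq_zero (x : EuclideanSpace ℝ (Fin 3))
    (hx : ∀ k : ℤ, ¬ ‖x - (k:ℝ) • e1‖ < 1/8) : fper x = 0 := by
  unfold fper
  simp only [hx, if_false]
  exact tsum_zero


/-- volume of the unit ball in ℝ³ -/
noncomputable def V3 : ℝ≥0∞ := volume (Metric.ball (0 : EuclideanSpace ℝ (Fin 3)) 1)

lemma V3_lt_top : V3 < ⊤ := measure_ball_lt_top

lemma V3_pos : 0 < V3 := Metric.measure_ball_pos _ _ one_pos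

noncomputable def gk (k : ℤ) (x : EuclideanSpace ℝ (Fin 3)) : ℝ≥0∞ :=
  if ‖x - (k:ℝ) • e1‖ < 1/8 then (ENNReal.ofReal ‖x - (k:ℝ) • e1‖⁻¹) ^ 2 else 0

lemma gk_meas (k : ℤ) : Measurable (gk k) := by
  unfold gk
  apply Measurable.ite
  · have : {x : EuclideanSpace ℝ (Fin 3) | ‖x - (k:ℝ) • e1‖ < 1/8} =
      Metric.ball ((k:ℝ) • e1) (1/8) := by
      ext x; simp [Metric.mem_ball, dist_eq_norm]
    rw [this]; exact measurableSet_ball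
  · exact ((((continuous_id.sub continuous_const).norm).measurable).inv.ennreal_ofReal).pow_const 2
  · exact measurable_const

lemma ball_vol_s15 (c : EuclideanSpace ℝ (Fin 3)) {r : ℝ} (hr : 0 ≤ r) :
    volume (Metric.ball c r) = ENNReal.ofReal (r ^ 3) * V3 := by
  rw [V3, Measure.addHaar_ball _ c hr, finrank_euclideanSpace_fin]

/-- integral of |x-c|⁻² over a ball around c -/
lemma lemA (c : EuclideanSpace ℝ (Fin 3)) {r : ℝ} (hr : 0 < r) :
    ∫⁻ x in Metric.ball c r, (ENNReal.ofReal ‖x - c‖⁻¹) ^ 2 ≤ 8 * ENNReal.ofReal r * V3 := by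
  set A : ℕ → Set (EuclideanSpace ℝ (Fin 3)) :=
    fun j => Metric.ball c (r / 2 ^ j) \ Metric.ball c (r / 2 ^ (j + 1)) with hA
  have cover : Metric.ball c r ⊆ {c} ∪ ⋃ j, A j := by
    intro x hx
    rcases eq_or_ne x c with rfl | hxc
    · exact Or.inl rfl
    · right
      set t := ‖x - c‖ with htdef
      have ht0 : 0 < t := norm_pos_iff.2 (sub_ne_zero.2 hxc)
      have htr : t < r := by rwa [Metric.mem_ball, dist_eq_norm] at hx
      have hP : ∃ n : ℕ, r / 2 ^ (n + 1) ≤ t := by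
        obtain ⟨n, hn⟩ := pow_unbounded_of_one_lt (r / t) (one_lt_two (α := ℝ))
        refine ⟨n, ?_⟩
        rw [div_le_iff₀ (by positivity)]
        rw [div_lt_iff₀ ht0] at hn
        have h2n : (2:ℝ) ^ n ≤ 2 ^ (n+1) := pow_le_pow_right₀ one_le_two (Nat.le_succ n)
        nlinarith
      classical
      set j := Nat.find hP with hj
      have hPj : r / 2 ^ (j + 1) ≤ t := Nat.find_spec hP
      have hupper : t < r / 2 ^ j := by
        rcases Nat.eq_zero_or_pos j with h0 | hpos
        · rw [h0]; simpa using htr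
        · obtain ⟨m, hm⟩ := Nat.exists_eq_succ_of_ne_zero hpos.ne'
          have hmlt : m < Nat.find hP := by rw [← hj]; omega
          have := Nat.find_min hP hmlt
          push_neg at this
          rw [hm]
          exact this
      refine Set.mem_iUnion.2 ⟨j, ?_, ?_⟩
      · rwa [Metric.mem_ball, dist_eq_norm]
      · rw [Metric.mem_ball, dist_eq_norm]
        exact not_lt.2 hPj
  calc ∫⁻ x in Metric.ball c r, (ENNReal.ofReal ‖x - c‖⁻¹) ^ 2
      ≤ ∫⁻ x in {c} ∪ ⋃ j, A j, (ENNReal.ofReal ‖x - c‖⁻¹) ^ 2 :=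
        lintegral_mono_set cover
    _ ≤ (∫⁻ x in {c}, (ENNReal.ofReal ‖x - c‖⁻¹) ^ 2) +
        ∫⁻ x in ⋃ j, A j, (ENNReal.ofReal ‖x - c‖⁻¹) ^ 2 := lintegral_union_le _ _ _
    _ = ∫⁻ x in ⋃ j, A j, (ENNReal.ofReal ‖x - c‖⁻¹) ^ 2 := by
        rw [setLIntegral_measure_zero _ _ (measure_singleton c), zero_add]
    _ ≤ ∑' j, ∫⁻ x in A j, (ENNReal.ofReal ‖x - c‖⁻¹) ^ 2 := lintegral_iUnion_le _ _
    _ ≤ ∑' j : ℕ, (ENNReal.ofReal (4 * r) * (ENNReal.ofReal (1/2)) ^ j) * V3 := by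
        apply ENNReal.tsum_le_tsum
        intro j
        have hmeas : MeasurableSet (A j) := measurableSet_ball.diff measurableSet_ball
        have hb : ∀ x ∈ A j, (ENNReal.ofReal ‖x - c‖⁻¹) ^ 2 ≤
            ENNReal.ofReal ((r / 2 ^ (j+1))⁻¹) ^ 2 := by
          intro x hx
          obtain ⟨hx1, hx2⟩ := hx
          rw [Metric.mem_ball, dist_eq_norm, not_lt] at hx2
          have h1 : ‖x - c‖⁻¹ ≤ (r / 2 ^ (j+1))⁻¹ := by
            apply inv_anti₀ (by positivity) hx2
          exact pow_le_pow_left₀ zero_le (ENNReal.ofReal_le_ofReal h1) 2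
        calc ∫⁻ x in A j, (ENNReal.ofReal ‖x - c‖⁻¹) ^ 2
            ≤ ∫⁻ _ in A j, ENNReal.ofReal ((r / 2 ^ (j+1))⁻¹) ^ 2 :=
              setLIntegral_mono' hmeas hb
          _ = ENNReal.ofReal ((r / 2 ^ (j+1))⁻¹) ^ 2 * volume (A j) := setLIntegral_const _ _
          _ ≤ ENNReal.ofReal ((r / 2 ^ (j+1))⁻¹) ^ 2 * volume (Metric.ball c (r / 2 ^ j)) := by
              gcongr
              exact Set.diff_subset
          _ = ENNReal.ofReal ((r / 2 ^ (j+1))⁻¹) ^ 2 *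
                (ENNReal.ofReal ((r / 2 ^ j) ^ 3) * V3) := by
              rw [ball_vol_s15 c (by positivity)]
          _ = (ENNReal.ofReal (4 * r) * (ENNReal.ofReal (1/2)) ^ j) * V3 := by
              rw [← ENNReal.ofReal_pow (by positivity), ← mul_assoc,
                ← ENNReal.ofReal_mul (by positivity),
                ← ENNReal.ofReal_pow (by norm_num : (0:ℝ) ≤ 1/2),
                ← ENNReal.ofReal_mul (by positivity)]
              congr 1
              congr 1
              field_simp
              rw [one_div_pow]
              field_simp
              ring
    _ = (ENNReal.ofReal (4 * r) * ∑' j : ℕ, (ENNReal.ofReal (1/2)) ^ j) * V3 := by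
        rw [ENNReal.tsum_mul_right, ENNReal.tsum_mul_left]
    _ ≤ 8 * ENNReal.ofReal r * V3 := by
        have h12 : ENNReal.ofReal (1/2 : ℝ) = 2⁻¹ := by
          rw [show (1/2 : ℝ) = (2:ℝ)⁻¹ by norm_num,
            ENNReal.ofReal_inv_of_pos (by norm_num), ENNReal.ofReal_ofNat]
        rw [h12, ENNReal.tsum_geometric]
        have : (1 - 2⁻¹ : ℝ≥0∞)⁻¹ = 2 := by
          rw [show (2⁻¹ : ℝ≥0∞) = 1/2 by rw [one_div], ENNReal.sub_half one_ne_top]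
          simp
        rw [this, ENNReal.ofReal_mul (by norm_num), ENNReal.ofReal_ofNat]
        apply le_of_eq
        ring

lemma fper_sq_eq (x : EuclideanSpace ℝ (Fin 3)) :
    (‖fper x‖₊ : ℝ≥0∞) ^ 2 = ∑' k : ℤ, gk k x := by
  by_cases hx : ∃ k : ℤ, ‖x - (k:ℝ) • e1‖ < 1/8
  · obtain ⟨k, hkx⟩ := hx
    rw [tsum_eq_single k]
    · rw [gk, if_pos hkx, fper_eq x k hkx,
        ← enorm_eq_nnnorm, Real.enorm_eq_ofReal (inv_nonneg.2 (norm_nonneg _))]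
    · intro j hj
      rw [gk, if_neg]
      intro hjx
      have h1 := dist_int_smul hj
      have h2 : ‖(j:ℝ) • e1 - (k:ℝ) • e1‖ ≤ ‖(j:ℝ) • e1 - x‖ + ‖x - (k:ℝ) • e1‖ :=
        norm_sub_le_norm_sub_add_norm_sub _ _ _
      have h3 : ‖(j:ℝ) • e1 - x‖ = ‖x - (j:ℝ) • e1‖ := norm_sub_rev _ _
      linarith
  · push_neg at hx
    rw [fper_eq_zero x (fun k => not_lt.2 (hx k))]
    have hg : ∀ k : ℤ, gk k x = 0 := fun k => by rw [gk, if_neg (not_lt.2 (hx k))]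
    simp [hg]

lemma gk_le (k : ℤ) (x : EuclideanSpace ℝ (Fin 3)) :
    gk k x ≤ (ENNReal.ofReal ‖x - (k:ℝ) • e1‖⁻¹) ^ 2 := by
  rw [gk]; split <;> simp

lemma gk_total (k : ℤ) : ∫⁻ x, gk k x ≤ V3 := by
  classical
  have : ∫⁻ x, gk k x =
      ∫⁻ x in Metric.ball ((k:ℝ) • e1) (1/8), (ENNReal.ofReal ‖x - (k:ℝ) • e1‖⁻¹) ^ 2 := by
    rw [← lintegral_indicator measurableSet_ball]
    apply lintegral_congr
    intro y
    rw [gk, Set.indicator_apply]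
    simp only [Metric.mem_ball, dist_eq_norm]
  rw [this]
  calc ∫⁻ x in Metric.ball ((k:ℝ) • e1) (1/8), (ENNReal.ofReal ‖x - (k:ℝ) • e1‖⁻¹) ^ 2
      ≤ 8 * ENNReal.ofReal (1/8) * V3 := lemA _ (by norm_num)
    _ = V3 := by
        rw [show (1/8 : ℝ) = (8:ℝ)⁻¹ by norm_num, ENNReal.ofReal_inv_of_pos (by norm_num),
          ENNReal.ofReal_ofNat, ENNReal.mul_inv_cancel (by norm_num) (by norm_num), one_mul]

lemma gk_vanish (x0 : EuclideanSpace ℝ (Fin 3)) {R : ℝ} (k : ℤ)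
    (h : ¬ ‖x0 - (k:ℝ) • e1‖ < R + 1/8) :
    ∫⁻ x in Metric.ball x0 R, gk k x = 0 := by
  refine le_antisymm ?_ zero_le
  have hz : ∀ x ∈ Metric.ball x0 R, gk k x ≤ 0 := by
    intro x hx
    rw [Metric.mem_ball, dist_eq_norm] at hx
    rw [gk, if_neg]
    intro hxk
    apply h
    calc ‖x0 - (k:ℝ) • e1‖ ≤ ‖x0 - x‖ + ‖x - (k:ℝ) • e1‖ :=
        norm_sub_le_norm_sub_add_norm_sub _ _ _
      _ < R + 1/8 := by rw [norm_sub_rev]; exact add_lt_add hx hxk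
  calc ∫⁻ x in Metric.ball x0 R, gk k x ≤ ∫⁻ _ in Metric.ball x0 R, 0 :=
      setLIntegral_mono' measurableSet_ball hz
    _ = 0 := by simp

lemma morrey_core (x0 : EuclideanSpace ℝ (Fin 3)) {R : ℝ} (hR : 0 < R) :
    ∫⁻ x in Metric.ball x0 R, (‖fper x‖₊ : ℝ≥0∞) ^ 2 ≤ 24 * V3 * ENNReal.ofReal R := by
  have hrw : ∫⁻ x in Metric.ball x0 R, (‖fper x‖₊ : ℝ≥0∞) ^ 2
      = ∑' k : ℤ, ∫⁻ x in Metric.ball x0 R, gk k x := by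
    rw [← lintegral_tsum (fun k => (gk_meas k).aemeasurable)]
    exact lintegral_congr fun x => fper_sq_eq x
  rw [hrw]
  rcases lt_or_ge R (1/8) with hR8 | hR8
  · by_cases hex : ∃ k : ℤ, ‖x0 - (k:ℝ) • e1‖ < R + 1/8
    · obtain ⟨k, hk⟩ := hex
      have huniq : ∀ j : ℤ, j ≠ k → ∫⁻ x in Metric.ball x0 R, gk j x = 0 := by
        intro j hj
        apply gk_vanish
        intro hjx
        have h1 := dist_int_smul hj
        have h2 : ‖(j:ℝ) • e1 - (k:ℝ) • e1‖ ≤ ‖(j:ℝ) • e1 - x0‖ + ‖x0 - (k:ℝ) • e1‖ :=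
          norm_sub_le_norm_sub_add_norm_sub _ _ _
        have h3 : ‖(j:ℝ) • e1 - x0‖ = ‖x0 - (j:ℝ) • e1‖ := norm_sub_rev _ _
        linarith
      rw [tsum_eq_single k huniq]
      rcases le_or_gt ‖x0 - (k:ℝ) • e1‖ (2*R) with hd | hd
      · have hsub : Metric.ball x0 R ⊆ Metric.ball ((k:ℝ) • e1) (3*R) := by
          intro x hx
          rw [Metric.mem_ball, dist_eq_norm] at hx ⊢
          calc ‖x - (k:ℝ) • e1‖ ≤ ‖x - x0‖ + ‖x0 - (k:ℝ) • e1‖ :=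
              norm_sub_le_norm_sub_add_norm_sub _ _ _
            _ < R + 2*R := add_lt_add_of_lt_of_le hx hd
            _ = 3*R := by ring
        calc ∫⁻ x in Metric.ball x0 R, gk k x
            ≤ ∫⁻ x in Metric.ball x0 R, (ENNReal.ofReal ‖x - (k:ℝ) • e1‖⁻¹) ^ 2 :=
              setLIntegral_mono' measurableSet_ball (fun x _ => gk_le k x)
          _ ≤ ∫⁻ x in Metric.ball ((k:ℝ) • e1) (3*R),
                (ENNReal.ofReal ‖x - (k:ℝ) • e1‖⁻¹) ^ 2 := lintegral_mono_set hsub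
          _ ≤ 8 * ENNReal.ofReal (3*R) * V3 := lemA _ (by linarith)
          _ = 24 * V3 * ENNReal.ofReal R := by
              rw [ENNReal.ofReal_mul (by norm_num), ENNReal.ofReal_ofNat]
              ring
      · have hbound : ∀ x ∈ Metric.ball x0 R, gk k x ≤ ENNReal.ofReal (R⁻¹) ^ 2 := by
          intro x hx
          rw [Metric.mem_ball, dist_eq_norm] at hx
          refine (gk_le k x).trans ?_
          have hxk : R < ‖x - (k:ℝ) • e1‖ := by
            have h2 : ‖x0 - (k:ℝ) • e1‖ ≤ ‖x0 - x‖ + ‖x - (k:ℝ) • e1‖ :=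
              norm_sub_le_norm_sub_add_norm_sub _ _ _
            have h3 : ‖x0 - x‖ = ‖x - x0‖ := norm_sub_rev _ _
            linarith
          have hinv : ‖x - (k:ℝ) • e1‖⁻¹ ≤ R⁻¹ := inv_anti₀ hR hxk.le
          exact pow_le_pow_left₀ zero_le (ENNReal.ofReal_le_ofReal hinv) 2
        calc ∫⁻ x in Metric.ball x0 R, gk k x
            ≤ ∫⁻ _ in Metric.ball x0 R, ENNReal.ofReal (R⁻¹) ^ 2 :=
              setLIntegral_mono' measurableSet_ball hbound
          _ = ENNReal.ofReal (R⁻¹) ^ 2 * volume (Metric.ball x0 R) := setLIntegral_const _ _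
          _ = ENNReal.ofReal (R⁻¹ ^ 2 * R ^ 3) * V3 := by
              rw [ball_vol_s15 x0 hR.le, ← ENNReal.ofReal_pow (by positivity), ← mul_assoc,
                ← ENNReal.ofReal_mul (by positivity)]
          _ = ENNReal.ofReal R * V3 := by
              congr 2
              field_simp
          _ ≤ 24 * V3 * ENNReal.ofReal R := by
              rw [show ENNReal.ofReal R * V3 = 1 * V3 * ENNReal.ofReal R by ring]
              gcongr
              norm_num
    · push_neg at hex
      have hz : ∀ k : ℤ, ∫⁻ x in Metric.ball x0 R, gk k x = 0 := fun k =>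
        gk_vanish x0 k (not_lt.2 (hex k))
      simp only [hz, tsum_zero]
      exact zero_le
  · set a := x0 0 with ha
    set s := R + 1/8 with hs
    set T : Finset ℤ := Finset.Icc ⌈a - s⌉ ⌊a + s⌋ with hT
    have hout : ∀ k : ℤ, k ∉ T → ∫⁻ x in Metric.ball x0 R, gk k x = 0 := by
      intro k hknot
      apply gk_vanish
      intro hcon
      apply hknot
      have hcomp : |a - k| ≤ ‖x0 - (k:ℝ) • e1‖ := by
        have := coord_le_norm (x0 - (k:ℝ) • e1)
        rwa [coord_sub_smul] at this
      have habs : |a - (k:ℝ)| < s := lt_of_le_of_lt hcomp hcon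
      rw [abs_lt] at habs
      rw [hT, Finset.mem_Icc]
      constructor
      · rw [Int.ceil_le]; push_cast; linarith [habs.2]
      · rw [Int.le_floor]; push_cast; linarith [habs.1]
    rw [tsum_eq_sum hout]
    have hcard : (T.card : ℝ) ≤ 18 * R := by
      have h1 : a - s ≤ ((⌈a - s⌉ : ℤ) : ℝ) := Int.le_ceil _
      have h2 : ((⌊a + s⌋ : ℤ) : ℝ) ≤ a + s := Int.floor_le _
      have hc : T.card = (⌊a + s⌋ + 1 - ⌈a - s⌉).toNat := by rw [hT, Int.card_Icc]
      rw [hc]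
      rcases le_or_gt (⌊a + s⌋ + 1 - ⌈a - s⌉) 0 with hle | hlt
      · rw [Int.toNat_of_nonpos hle]
        push_cast
        linarith
      · have h4 : (((⌊a + s⌋ + 1 - ⌈a - s⌉).toNat : ℤ) : ℝ) = ((⌊a + s⌋ + 1 - ⌈a - s⌉ : ℤ) : ℝ) := by
          rw [Int.toNat_of_nonneg hlt.le]
        push_cast at h4 ⊢
        rw [h4]
        rw [hs] at h1 h2 ⊢
        linarith
    calc ∑ k ∈ T, ∫⁻ x in Metric.ball x0 R, gk k x
        ≤ ∑ _k ∈ T, V3 := Finset.sum_le_sum (fun k _ =>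
          le_trans (lintegral_mono' Measure.restrict_le_self le_rfl) (gk_total k))
      _ = (T.card : ℝ≥0∞) * V3 := by rw [Finset.sum_const, nsmul_eq_mul]
      _ ≤ ENNReal.ofReal (18 * R) * V3 := by
          gcongr
          rw [← ENNReal.ofReal_natCast]
          exact ENNReal.ofReal_le_ofReal hcard
      _ ≤ 24 * V3 * ENNReal.ofReal R := by
          rw [ENNReal.ofReal_mul (by norm_num), ENNReal.ofReal_ofNat,
            show (24 : ℝ≥0∞) * V3 * ENNReal.ofReal R = 24 * ENNReal.ofReal R * V3 by ring]
          gcongr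
          norm_num

/-- `fper ∈ M^{2,1}(ℝ³)` but `fper ∉ E²`, the closure of `C_c^∞` in `L²_uloc`. -/
theorem periodic_example_M21_not_E2 :
    M21sq fper < ⊤ ∧
    ¬ (∀ ε : ℝ, 0 < ε → ∃ φ : EuclideanSpace ℝ (Fin 3) → ℝ,
        ContDiff ℝ (⊤ : ℕ∞) φ ∧ HasCompactSupport φ ∧
        ∀ y : EuclideanSpace ℝ (Fin 3),
          ∫⁻ x in Metric.ball y 1, (‖fper x - φ x‖₊ : ℝ≥0∞) ^ 2 < ENNReal.ofReal ε) := by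
  constructor
  · have hb : M21sq fper ≤ 24 * V3 := by
      rw [M21sq]
      apply iSup_le; intro x0
      apply iSup_le; intro R
      apply iSup_le; intro hR
      rw [Set.mem_Ioi] at hR
      calc (ENNReal.ofReal R)⁻¹ * ∫⁻ x in Metric.ball x0 R, (‖fper x‖₊ : ℝ≥0∞) ^ 2
          ≤ (ENNReal.ofReal R)⁻¹ * (24 * V3 * ENNReal.ofReal R) := by
            gcongr
            exact morrey_core x0 hR
        _ = 24 * V3 * (ENNReal.ofReal R * (ENNReal.ofReal R)⁻¹) := by ring
        _ = 24 * V3 := by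
            rw [ENNReal.mul_inv_cancel (ENNReal.ofReal_pos.2 hR).ne' ENNReal.ofReal_ne_top,
              mul_one]
    exact lt_of_le_of_lt hb (ENNReal.mul_lt_top (by norm_num) V3_lt_top)
  · intro H
    set c0 : ℝ≥0∞ := 64 * volume (Metric.ball (0 : EuclideanSpace ℝ (Fin 3)) (1/8)) with hc0
    have hc0pos : 0 < c0 :=
      ENNReal.mul_pos (by norm_num) (Metric.measure_ball_pos _ _ (by norm_num)).ne'
    have hc0top : c0 ≠ ⊤ := ENNReal.mul_ne_top (by norm_num) measure_ball_lt_top.ne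
    obtain ⟨φ, hφs, hφc, hφ⟩ := H c0.toReal (ENNReal.toReal_pos hc0pos.ne' hc0top)
    obtain ⟨r, hr0, hr⟩ := hφc.isBounded.subset_closedBall_lt 0 0
    set k : ℤ := ⌈r⌉ + 2 with hkdef
    have hkr : r + 2 ≤ (k:ℝ) := by
      have := Int.le_ceil r
      rw [hkdef]
      push_cast
      linarith
    set y : EuclideanSpace ℝ (Fin 3) := (k:ℝ) • e1 with hy'
    have hky : ‖y‖ = (k:ℝ) := by
      rw [hy', norm_smul, e1_norm, mul_one, Real.norm_eq_abs, abs_of_pos (by linarith)]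
    have hlow : c0 ≤ ∫⁻ x in Metric.ball y 1, (‖fper x - φ x‖₊ : ℝ≥0∞) ^ 2 := by
      have hmeasset : MeasurableSet (Metric.ball y (1/8) \ {y}) :=
        measurableSet_ball.diff (measurableSet_singleton y)
      calc c0 = 64 * volume (Metric.ball y (1/8) \ {y}) := by
            rw [measure_diff_null (measure_singleton y), Measure.addHaar_ball_center]
        _ = ∫⁻ _ in Metric.ball y (1/8) \ {y}, (64:ℝ≥0∞) := (setLIntegral_const _ _).symm
        _ ≤ ∫⁻ x in Metric.ball y (1/8) \ {y}, (‖fper x - φ x‖₊ : ℝ≥0∞) ^ 2 := by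
            apply setLIntegral_mono' hmeasset
            intro x hx
            obtain ⟨hx1, hx2⟩ := hx
            rw [Metric.mem_ball, dist_eq_norm] at hx1
            have hxy : x ≠ y := by simpa using hx2
            have hφ0 : φ x = 0 := by
              apply image_eq_zero_of_notMem_tsupport
              intro hmem
              have hxr := hr hmem
              rw [Metric.mem_closedBall, dist_zero_right] at hxr
              have h1 : ‖y‖ - ‖x‖ ≤ ‖y - x‖ := norm_sub_norm_le y x
              have h2 : ‖y - x‖ = ‖x - y‖ := norm_sub_rev _ _
              rw [hky] at h1
              linarith
            have hfx : fper x = ‖x - y‖⁻¹ := fper_eq x k hx1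
            have h0 : 0 < ‖x - y‖ := norm_pos_iff.2 (sub_ne_zero.2 hxy)
            have h8 : (8:ℝ) ≤ ‖x - y‖⁻¹ := by
              have := inv_anti₀ h0 hx1.le
              norm_num at this
              linarith
            rw [hφ0, sub_zero, hfx, ← enorm_eq_nnnorm, Real.enorm_eq_ofReal (by positivity)]
            calc (64:ℝ≥0∞) = ENNReal.ofReal 8 ^ 2 := by
                  rw [ENNReal.ofReal_ofNat]; norm_num
              _ ≤ ENNReal.ofReal ‖x - y‖⁻¹ ^ 2 :=
                  pow_le_pow_left₀ zero_le (ENNReal.ofReal_le_ofReal h8) 2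
        _ ≤ ∫⁻ x in Metric.ball y 1, (‖fper x - φ x‖₊ : ℝ≥0∞) ^ 2 := by
            apply lintegral_mono_set
            intro x hx
            have hx1 := hx.1
            rw [Metric.mem_ball] at hx1 ⊢
            linarith
    have hup := hφ y
    rw [ENNReal.ofReal_toReal hc0top] at hup
    exact absurd hup (not_lt.2 hlow)
end
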